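/- arXiv:2401.13831 — 7 statements merged into one kernel-verified Lean document; each statement's English description precedes it below -/
import Mathlib

section
/- Let u : ℝᵐ → ℝ ∪ {−∞} be a utility function with effective domain ℝᵐ₊ that is a barrier, i.e., for some ū ∈ ℝ one has u(y) = ū for all y in ℝᵐ₊ \ ℝᵐ₊₊ (nonnegative vectors with at least one zero component) and u(y) > ū for all y in ℝᵐ₊₊ (strictly positive vectors). Assume the inequality system {x ∈ K : f_j(x) ≤ a_j for all j} satisfies the Slater condition. Then every solution x* of the scalarized problem of maximizing h(x) = u(a − f(x)) over K is a Slater point, i.e., f_j(x*) < a_j for all j = 1,…,m. -/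
/-- If the utility function `u` (with effective domain the nonnegative orthant) is a barrier
and the inequality system satisfies the Slater condition, then every maximizer over `K` of
`h x = u (a − f x)` is a Slater point for the system. -/
theorem stmt_3 {n m : ℕ} (K : Set (Fin n → ℝ)) (hKne : K.Nonempty)
    (hKcl : IsClosed K) (hKconv : Convex ℝ K)
    (f : Fin m → (Fin n → ℝ) → ℝ) (hf : ∀ j, ConvexOn ℝ Set.univ (f j))
    (a : Fin m → ℝ)
    (u : (Fin m → ℝ) → EReal)
    (hntop : ∀ y, u y ≠ ⊤)
    (hdom : ∀ y, u y ≠ ⊥ ↔ ∀ j, 0 ≤ y j)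
    (ubar : ℝ)
    (hbar₁ : ∀ y : Fin m → ℝ, (∀ j, 0 ≤ y j) → (∃ j, y j = 0) → u y = (ubar : EReal))
    (hbar₂ : ∀ y : Fin m → ℝ, (∀ j, 0 < y j) → (ubar : EReal) < u y)
    (hSlater : ∃ x ∈ K, ∀ j, f j x < a j)
    (xstar : Fin n → ℝ) (hxK : xstar ∈ K)
    (hsol : ∀ x ∈ K, u (fun j => a j - f j x) ≤ u (fun j => a j - f j xstar)) :
    ∀ j, f j xstar < a j := by
  obtain ⟨xb, hxbK, hxb⟩ := hSlater
  have hub : (ubar : EReal) < u (fun j => a j - f j xb) :=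
    hbar₂ _ (fun j => by simpa using sub_pos.mpr (hxb j))
  have hle := hsol xb hxbK
  have hstar : (ubar : EReal) < u (fun j => a j - f j xstar) := lt_of_lt_of_le hub hle
  have hnbot : u (fun j => a j - f j xstar) ≠ ⊥ := by
    intro h; rw [h] at hstar; exact (not_lt_bot hstar)
  have hnn : ∀ j, 0 ≤ a j - f j xstar := (hdom _).mp hnbot
  intro j
  by_contra h
  have hz : a j - f j xstar = 0 := le_antisymm (by linarith [not_lt.mp h]) (hnn j)
  have := hbar₁ _ hnn ⟨j, hz⟩
  rw [this] at hstar
  exact lt_irrefl _ hstar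
end

section
/- Let u : ℝᵐ → ℝ ∪ {−∞} be a utility function with effective domain exactly ℝᵐ₊ that is continuous on ℝᵐ₊. Let K ⊆ ℝⁿ be closed and the f_j continuous, and assume the set F = {x ∈ K : f_j(x) ≤ a_j for all j = 1,…,m} is nonempty and bounded. Then the scalarized problem of maximizing h(x) = u(a − f(x)) over K has at least one solution, i.e., there exists x* ∈ K with h(x*) ≥ h(x) for all x ∈ K. -/
/-- If the utility function `u` has effective domain exactly the nonnegative orthant and is
continuous on it, `K` is closed, the `f j` are continuous, and the feasible set
`F = {x ∈ K : f j x ≤ a j for all j}` is nonempty and bounded, then the scalarized problem of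
maximizing `h x = u (a − f x)` over `K` has at least one solution. -/
theorem stmt_8 {n m : ℕ} (K : Set (Fin n → ℝ)) (hKne : K.Nonempty)
    (hKcl : IsClosed K) (hKconv : Convex ℝ K)
    (f : Fin m → (Fin n → ℝ) → ℝ) (hf : ∀ j, ConvexOn ℝ Set.univ (f j))
    (hfc : ∀ j, Continuous (f j))
    (a : Fin m → ℝ)
    (u : (Fin m → ℝ) → EReal)
    (hntop : ∀ y, u y ≠ ⊤)
    (hdom : ∀ y, u y ≠ ⊥ ↔ ∀ j, 0 ≤ y j)
    (hcont : ContinuousOn u {y : Fin m → ℝ | ∀ j, 0 ≤ y j})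
    (hFne : {x | x ∈ K ∧ ∀ j, f j x ≤ a j}.Nonempty)
    (hFbd : Bornology.IsBounded {x | x ∈ K ∧ ∀ j, f j x ≤ a j}) :
    ∃ xstar ∈ K, ∀ x ∈ K,
      u (fun j => a j - f j x) ≤ u (fun j => a j - f j xstar) := by
  set F : Set (Fin n → ℝ) := {x | x ∈ K ∧ ∀ j, f j x ≤ a j} with hF
  have hFcl : IsClosed F := by
    have : F = K ∩ ⋂ j, {x | f j x ≤ a j} := by
      ext x; simp [hF, Set.mem_iInter]
    rw [this]
    exact hKcl.inter (isClosed_iInter fun j => isClosed_le (hfc j) continuous_const)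
  have hFcomp : IsCompact F := Metric.isCompact_of_isClosed_isBounded hFcl hFbd
  have hg : Continuous fun x : Fin n → ℝ => (fun j => a j - f j x) := by
    apply continuous_pi; intro j
    exact continuous_const.sub (hfc j)
  have hmaps : Set.MapsTo (fun x : Fin n → ℝ => (fun j => a j - f j x)) F
      {y : Fin m → ℝ | ∀ j, 0 ≤ y j} := by
    intro x hx j
    simpa using hx.2 j
  have hco : ContinuousOn (fun x => u (fun j => a j - f j x)) F :=
    hcont.comp hg.continuousOn hmaps
  obtain ⟨xstar, hxF, hmax⟩ := hFcomp.exists_isMaxOn hFne hco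
  refine ⟨xstar, hxF.1, fun x hx => ?_⟩
  by_cases hxf : ∀ j, f j x ≤ a j
  · exact hmax ⟨hx, hxf⟩
  · have : u (fun j => a j - f j x) = ⊥ := by
      by_contra hb
      exact hxf fun j => by linarith [(hdom _).1 hb j]
    simp [this]
end

section
/- Let u : ℝᵐ → ℝ ∪ {−∞} be a utility function with effective domain ℝᵐ₊ that is monotone on ℝᵐ₊ (u(y+δ) ≥ u(y) whenever y, y+δ ∈ ℝᵐ₊ and δ ≥ 0 componentwise) and strictly concave on ℝᵐ₊ (u(λy + (1−λ)z) > λu(y) + (1−λ)u(z) for all y ≠ z in ℝᵐ₊ and λ ∈ (0,1)). If x̂ ∈ K and x̃ ∈ K both solve the scalarized problem of maximizing h(x) = u(a − f(x)) over K, then f_j(x̂) = f_j(x̃) for all j = 1,…,m. -/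
/-- If the utility function `u` (with effective domain the nonnegative orthant) is monotone and
strictly concave on its domain, then any two maximizers over `K` of `h x = u (a − f x)` induce
the same objective values. -/
theorem stmt_9 {n m : ℕ} (K : Set (Fin n → ℝ)) (hKne : K.Nonempty)
    (hKcl : IsClosed K) (hKconv : Convex ℝ K)
    (f : Fin m → (Fin n → ℝ) → ℝ) (hf : ∀ j, ConvexOn ℝ Set.univ (f j))
    (a : Fin m → ℝ)
    (u : (Fin m → ℝ) → EReal)
    (hntop : ∀ y, u y ≠ ⊤)
    (hdom : ∀ y, u y ≠ ⊥ ↔ ∀ j, 0 ≤ y j)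
    (hmono : ∀ y δ : Fin m → ℝ, (∀ j, 0 ≤ y j) → (∀ j, 0 ≤ δ j) →
      (∀ j, 0 ≤ y j + δ j) → u y ≤ u (y + δ))
    (hsconc : ∀ y z : Fin m → ℝ, (∀ j, 0 ≤ y j) → (∀ j, 0 ≤ z j) → y ≠ z →
      ∀ l : ℝ, 0 < l → l < 1 →
        (l : EReal) * u y + ((1 - l : ℝ) : EReal) * u z < u (l • y + (1 - l) • z))
    (hFne : ∃ x ∈ K, ∀ j, f j x ≤ a j)
    (xhat xtil : Fin n → ℝ) (hxhK : xhat ∈ K) (hxtK : xtil ∈ K)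
    (hsolh : ∀ x ∈ K, u (fun j => a j - f j x) ≤ u (fun j => a j - f j xhat))
    (hsolt : ∀ x ∈ K, u (fun j => a j - f j x) ≤ u (fun j => a j - f j xtil)) :
    ∀ j, f j xhat = f j xtil := by
  obtain ⟨y, hy⟩ : ∃ y : Fin m → ℝ, y = fun j => a j - f j xhat := ⟨_, rfl⟩
  obtain ⟨z, hz⟩ : ∃ z : Fin m → ℝ, z = fun j => a j - f j xtil := ⟨_, rfl⟩
  rw [← hy] at hsolh
  rw [← hz] at hsolt
  -- the common optimal value is not ⊥
  obtain ⟨x0, hx0K, hx0⟩ := hFne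
  have hx0bot : u (fun j => a j - f j x0) ≠ ⊥ := by
    rw [hdom]; intro j; linarith [hx0 j]
  have hybot : u y ≠ ⊥ := fun h => hx0bot (le_bot_iff.1 (h ▸ hsolh x0 hx0K))
  have hzbot : u z ≠ ⊥ := fun h => hx0bot (le_bot_iff.1 (h ▸ hsolt x0 hx0K))
  have hynn : ∀ j, 0 ≤ y j := (hdom y).1 hybot
  have hznn : ∀ j, 0 ≤ z j := (hdom z).1 hzbot
  have heq : u y = u z := by
    refine le_antisymm ?_ ?_
    · rw [hy]; exact hsolt xhat hxhK
    · rw [hz]; exact hsolh xtil hxtK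
  -- suppose not
  by_contra hne
  push_neg at hne
  obtain ⟨j0, hj0⟩ := hne
  have hyz : y ≠ z := by
    intro h
    apply hj0
    have := congrFun h j0
    rw [hy, hz] at this
    simp only at this
    linarith
  -- midpoint
  have hxmK : (1/2 : ℝ) • xhat + (1/2 : ℝ) • xtil ∈ K :=
    hKconv hxhK hxtK (by norm_num) (by norm_num) (by norm_num)
  set xm : Fin n → ℝ := (1/2 : ℝ) • xhat + (1/2 : ℝ) • xtil with hxm
  have hmid : ∀ j, ((1/2 : ℝ) • y + (1/2 : ℝ) • z) j ≤ a j - f j xm := by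
    intro j
    have hcv := (hf j).2 (Set.mem_univ xhat) (Set.mem_univ xtil)
      (le_of_lt one_half_pos) (le_of_lt one_half_pos) (by norm_num)
    simp only [smul_eq_mul] at hcv
    have hyj : y j = a j - f j xhat := by rw [hy]
    have hzj : z j = a j - f j xtil := by rw [hz]
    simp only [Pi.add_apply, Pi.smul_apply, smul_eq_mul, hyj, hzj, hxm]
    linarith [hcv]
  -- value of u at midpoint combination
  obtain ⟨r, hr⟩ : ∃ r : ℝ, u y = (r : EReal) := by
    lift u y to ℝ using ⟨hntop y, hybot⟩ with r
    exact ⟨r, rfl⟩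
  have hstrict := hsconc y z hynn hznn hyz (1/2) (by norm_num) (by norm_num)
  have hhalf : (1 - 1/2 : ℝ) = 1/2 := by norm_num
  rw [hhalf] at hstrict
  rw [← heq, hr] at hstrict
  have hsum : ((1/2 : ℝ) : EReal) * (r : EReal) + ((1/2 : ℝ) : EReal) * (r : EReal)
      = (r : EReal) := by
    rw [← EReal.coe_mul, ← EReal.coe_add]
    exact congrArg Real.toEReal (by ring)
  rw [hsum] at hstrict
  -- monotonicity from midpoint combination to a - f xm
  have hwnn : ∀ j, 0 ≤ ((1/2 : ℝ) • y + (1/2 : ℝ) • z) j := by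
    intro j
    have h1 := hynn j
    have h2 := hznn j
    simp only [Pi.add_apply, Pi.smul_apply, smul_eq_mul]
    linarith
  have hδ : (fun j => a j - f j xm)
      = ((1/2 : ℝ) • y + (1/2 : ℝ) • z)
        + fun j => (a j - f j xm) - ((1/2 : ℝ) • y + (1/2 : ℝ) • z) j := by
    funext j
    simp only [Pi.add_apply]
    ring
  have hmono' : u ((1/2 : ℝ) • y + (1/2 : ℝ) • z) ≤ u (fun j => a j - f j xm) := by
    rw [hδ]
    refine hmono _ _ hwnn ?_ ?_
    · intro j
      have := hmid j
      show 0 ≤ a j - f j xm - ((1/2 : ℝ) • y + (1/2 : ℝ) • z) j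
      linarith
    · intro j
      have := hmid j
      have := hwnn j
      show 0 ≤ ((1/2 : ℝ) • y + (1/2 : ℝ) • z) j + (a j - f j xm - ((1/2 : ℝ) • y + (1/2 : ℝ) • z) j)
      linarith
  have hlt : (r : EReal) < u (fun j => a j - f j xm) := lt_of_lt_of_le hstrict hmono'
  have hle : u (fun j => a j - f j xm) ≤ (r : EReal) := by
    rw [← hr]; exact hsolh xm hxmK
  exact absurd (lt_of_lt_of_le hlt hle) (lt_irrefl _)
end

section
/- Assume the inequality system {x ∈ K : f_j(x) ≤ a_j for all j} satisfies the Slater condition. If x̂ is weak Pareto optimal for the multi-objective problem of minimizing (f_1,…,f_m) over K and satisfies f_j(x̂) ≤ a_j for all j, then there exist parameters α_1,…,α_m ≥ 0, not all zero, such that x̂ solves the Cobb-Douglas scalarized problem: ∏_{j=1}^m (a_j − f_j(x̂))^{α_j} ≥ ∏_{j=1}^m (a_j − f_j(x))^{α_j} for every x ∈ K with f_j(x) ≤ a_j for all j (and h_CD(x̂) ≥ h_CD(x) for all x ∈ K, where h_CD(x) = −∞ whenever f_j(x) > a_j for some j). -/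
open Classical in
/-- The Cobb-Douglas scalarized objective: `∏ j, (a j − f j x) ^ (α j)` when `f j x ≤ a j` for
all `j`, and `−∞` otherwise. -/
noncomputable def hCD {n m : ℕ} (f : Fin m → (Fin n → ℝ) → ℝ) (a : Fin m → ℝ)
    (α : Fin m → ℝ) (x : Fin n → ℝ) : EReal :=
  if ∀ j, f j x ≤ a j then (((∏ j, (a j - f j x) ^ (α j)) : ℝ) : EReal) else ⊥

/-!
A weak Pareto optimum `x̂` of a convex problem minimizes some weighted sum `∑ λⱼ fⱼ` with
`λ ≥ 0`, `λ ≠ 0`: separate the point `f(x̂)` from the open convex set `f(K) + ℝᵐ₊₊`.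
Put `αⱼ = λⱼ (aⱼ − fⱼ(x̂))`. The inequality `t ≤ exp (t − 1)` at `t = (aⱼ − fⱼ(x)) / (aⱼ − fⱼ(x̂))`,
raised to the power `αⱼ` and multiplied over `j`, turns
`∑ λⱼ (aⱼ − fⱼ(x)) ≤ ∑ λⱼ (aⱼ − fⱼ(x̂))` into the Cobb-Douglas inequality.
The Slater point makes `∑ αⱼ > 0`.
-/

open Filter Topology

lemma le_of_forall_pos_lt_add_mul {a b c : ℝ} (h : ∀ t > 0, a < b + t * c) : a ≤ b := by
  have hlim : Tendsto (fun t => b + t * c) (𝓝[>] 0) (𝓝 b) := by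
    have : Continuous fun t : ℝ => b + t * c := by fun_prop
    simpa using (this.tendsto 0).mono_left nhdsWithin_le_nhds
  exact ge_of_tendsto hlim (eventually_nhdsWithin_of_forall fun t ht => (h t ht).le)

lemma nonneg_of_forall_pos_lt_add_mul {a b c : ℝ} (h : ∀ t > 0, a < b + t * c) : 0 ≤ c := by
  by_contra! hc
  have ht : 0 < (|b - a| + 1) / -c := div_pos (by positivity) (by linarith)
  have := h _ ht
  rw [div_mul_eq_mul_div, div_neg, mul_div_cancel_right₀ _ hc.ne] at this
  linarith [le_abs_self (b - a)]

namespace Real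

lemma rpow_le_exp_mul_sub_one {x p : ℝ} (hx : 0 ≤ x) (hp : 0 ≤ p) :
    x ^ p ≤ exp (p * (x - 1)) := by
  calc x ^ p ≤ exp (x - 1) ^ p :=
        rpow_le_rpow hx (by linarith [add_one_le_exp (x - 1)]) hp
    _ = exp (p * (x - 1)) := by rw [← exp_mul, mul_comm]

lemma rpow_mul_le_rpow_mul_mul_exp {u v w : ℝ} (hu : 0 ≤ u) (hv : 0 ≤ v) (hw : 0 ≤ w) :
    u ^ (w * v) ≤ v ^ (w * v) * exp (w * (u - v)) := by
  rcases hv.eq_or_lt with rfl | hv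
  · simpa using mul_nonneg hw hu
  calc u ^ (w * v) = (u / v) ^ (w * v) * v ^ (w * v) := by
        rw [← mul_rpow (div_nonneg hu hv.le) hv.le, div_mul_cancel₀ _ hv.ne']
    _ ≤ exp (w * v * (u / v - 1)) * v ^ (w * v) := by
        gcongr
        exact rpow_le_exp_mul_sub_one (div_nonneg hu hv.le) (mul_nonneg hw hv.le)
    _ = v ^ (w * v) * exp (w * (u - v)) := by
        rw [mul_comm]; congr 2; field_simp

lemma prod_rpow_le_prod_rpow_of_sum_mul_le {ι : Type*} (s : Finset ι) {u v w : ι → ℝ}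
    (hu : ∀ j ∈ s, 0 ≤ u j) (hv : ∀ j ∈ s, 0 ≤ v j) (hw : ∀ j ∈ s, 0 ≤ w j)
    (hsum : ∑ j ∈ s, w j * u j ≤ ∑ j ∈ s, w j * v j) :
    ∏ j ∈ s, u j ^ (w j * v j) ≤ ∏ j ∈ s, v j ^ (w j * v j) := by
  have hexp : exp (∑ j ∈ s, w j * (u j - v j)) ≤ 1 := by
    rw [exp_le_one_iff]
    simpa only [mul_sub, Finset.sum_sub_distrib, sub_nonpos] using hsum
  calc ∏ j ∈ s, u j ^ (w j * v j)
      ≤ ∏ j ∈ s, v j ^ (w j * v j) * exp (w j * (u j - v j)) :=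
        Finset.prod_le_prod (fun j hj => rpow_nonneg (hu j hj) _)
          fun j hj => rpow_mul_le_rpow_mul_mul_exp (hu j hj) (hv j hj) (hw j hj)
    _ = (∏ j ∈ s, v j ^ (w j * v j)) * exp (∑ j ∈ s, w j * (u j - v j)) := by
        rw [Finset.prod_mul_distrib, exp_sum]
    _ ≤ ∏ j ∈ s, v j ^ (w j * v j) :=
        mul_le_of_le_one_right (Finset.prod_nonneg fun j hj => rpow_nonneg (hv j hj) _) hexp

end Real

section WeakPareto

variable {ι E : Type*}

def IsWeakParetoMinOn (f : ι → E → ℝ) (K : Set E) (x : E) : Prop :=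
  x ∈ K ∧ ∀ y ∈ K, ∃ j, f j x ≤ f j y

def strictUpperImage (f : ι → E → ℝ) (K : Set E) : Set (ι → ℝ) :=
  {z | ∃ x ∈ K, ∀ j, f j x < z j}

lemma isOpen_strictUpperImage [Finite ι] (f : ι → E → ℝ) (K : Set E) :
    IsOpen (strictUpperImage f K) := by
  have : strictUpperImage f K = ⋃ x ∈ K, Set.univ.pi fun j => Set.Ioi (f j x) := by
    ext z; simp [strictUpperImage]
  rw [this]
  exact isOpen_biUnion fun x _ => isOpen_set_pi Set.finite_univ fun j _ => isOpen_Ioi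

lemma convex_strictUpperImage [AddCommGroup E] [Module ℝ E] {f : ι → E → ℝ} {K : Set E}
    (hK : Convex ℝ K) (hf : ∀ j, ConvexOn ℝ K (f j)) : Convex ℝ (strictUpperImage f K) := by
  rintro z₁ ⟨x₁, hx₁, h₁⟩ z₂ ⟨x₂, hx₂, h₂⟩ s t hs ht hst
  refine ⟨s • x₁ + t • x₂, hK hx₁ hx₂ hs ht hst, fun j => ?_⟩
  calc f j (s • x₁ + t • x₂) ≤ s • f j x₁ + t • f j x₂ := (hf j).2 hx₁ hx₂ hs ht hst
    _ < (s • z₁ + t • z₂) j := by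
        simp only [Pi.add_apply, Pi.smul_apply, smul_eq_mul]
        rcases hs.eq_or_lt with rfl | hs
        · have ht : 0 < t := by linarith
          simpa using mul_lt_mul_of_pos_left (h₂ j) ht
        · linarith [mul_lt_mul_of_pos_left (h₁ j) hs, mul_le_mul_of_nonneg_left (h₂ j).le ht]

lemma IsWeakParetoMinOn.notMem_strictUpperImage {f : ι → E → ℝ} {K : Set E} {x : E}
    (hx : IsWeakParetoMinOn f K x) : (fun j => f j x) ∉ strictUpperImage f K := by
  rintro ⟨y, hy, hlt⟩
  obtain ⟨j, hj⟩ := hx.2 y hy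
  exact (hlt j).not_ge hj

theorem IsWeakParetoMinOn.exists_weights [Fintype ι] [AddCommGroup E] [Module ℝ E]
    {f : ι → E → ℝ} {K : Set E} {x : E}
    (hK : Convex ℝ K) (hf : ∀ j, ConvexOn ℝ K (f j)) (hx : IsWeakParetoMinOn f K x) :
    ∃ w : ι → ℝ, (∀ j, 0 ≤ w j) ∧ 0 < ∑ j, w j ∧
      ∀ y ∈ K, ∑ j, w j * f j x ≤ ∑ j, w j * f j y := by
  classical
  obtain ⟨φ, hφ⟩ := geometric_hahn_banach_open_point (convex_strictUpperImage hK hf)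
    (isOpen_strictUpperImage f K) hx.notMem_strictUpperImage
  set ℓ := -(φ : (ι → ℝ) →ₗ[ℝ] ℝ)
  set e : ι → ι → ℝ := fun i j => if i = j then 1 else 0
  have hsep : ∀ y ∈ K, ∀ v : ι → ℝ, (∀ j, 0 < v j) →
      ℓ (fun j => f j x) < ℓ (fun j => f j y) + ℓ v := by
    intro y hy v hv
    rw [← map_add]
    have := hφ ((fun j => f j y) + v) ⟨y, hy, fun j => lt_add_of_pos_right _ (hv j)⟩
    simp only [ℓ, LinearMap.neg_apply, ContinuousLinearMap.coe_coe]
    linarith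
  have hℓ1 : 0 < ℓ 1 := by simpa using hsep x hx.1 1 fun _ => one_pos
  have hℓe : ∀ i, 0 ≤ ℓ (e i) := fun i => nonneg_of_forall_pos_lt_add_mul fun t ht => by
    have := hsep x hx.1 (1 + t • e i) fun j => by
      simp only [e, Pi.add_apply, Pi.one_apply, Pi.smul_apply, smul_eq_mul]
      split_ifs <;> linarith
    simpa [map_add, map_smul] using this
  have hℓK : ∀ y ∈ K, ℓ (fun j => f j x) ≤ ℓ (fun j => f j y) := fun y hy =>
    le_of_forall_pos_lt_add_mul fun t ht => by
      simpa [map_smul] using hsep y hy (t • 1) fun _ => by simpa using ht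
  have hℓsum : ∀ z, ℓ z = ∑ j, ℓ (e j) * z j := fun z => by
    rw [ℓ.pi_apply_eq_sum_univ z]; simp only [smul_eq_mul, mul_comm, e]
  refine ⟨fun j => ℓ (e j), hℓe, ?_, fun y hy => ?_⟩
  · simpa [hℓsum 1] using hℓ1
  · have := hℓK y hy
    rwa [hℓsum, hℓsum (fun j => f j y)] at this

end WeakPareto

lemma hCD_le_hCD {n m : ℕ} {f : Fin m → (Fin n → ℝ) → ℝ} {a α : Fin m → ℝ}
    {x xhat : Fin n → ℝ}
    (hxa : ∀ j, f j xhat ≤ a j)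
    (h : (∀ j, f j x ≤ a j) → ∏ j, (a j - f j x) ^ α j ≤ ∏ j, (a j - f j xhat) ^ α j) :
    hCD f a α x ≤ hCD f a α xhat := by
  unfold hCD
  rw [if_pos hxa]
  split_ifs with hx
  · exact_mod_cast h hx
  · exact bot_le

theorem stmt_12_general {n m : ℕ} (K : Set (Fin n → ℝ))
    (hKconv : Convex ℝ K)
    (f : Fin m → (Fin n → ℝ) → ℝ) (hf : ∀ j, ConvexOn ℝ Set.univ (f j))
    (a : Fin m → ℝ)
    (hSlater : ∃ x ∈ K, ∀ j, f j x < a j)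
    (xhat : Fin n → ℝ) (hxK : xhat ∈ K)
    (hW : ∀ y ∈ K, ∃ j, f j xhat ≤ f j y)
    (hxa : ∀ j, f j xhat ≤ a j) :
    ∃ α : Fin m → ℝ, (∀ j, 0 ≤ α j) ∧ (∃ j, α j ≠ 0) ∧
      (∀ x ∈ K, (∀ j, f j x ≤ a j) →
        ∏ j, (a j - f j x) ^ (α j) ≤ ∏ j, (a j - f j xhat) ^ (α j)) ∧
      (∀ x ∈ K, hCD f a α x ≤ hCD f a α xhat) := by
  obtain ⟨w, hw, hwpos, hmin⟩ := IsWeakParetoMinOn.exists_weights hKconv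
    (fun j => (hf j).subset (Set.subset_univ K) hKconv) ⟨hxK, hW⟩
  have hslack : ∀ y ∈ K, ∑ j, w j * (a j - f j y) ≤ ∑ j, w j * (a j - f j xhat) := by
    intro y hy
    simp only [mul_sub, Finset.sum_sub_distrib]
    linarith [hmin y hy]
  have hprod : ∀ x ∈ K, (∀ j, f j x ≤ a j) →
      ∏ j, (a j - f j x) ^ (w j * (a j - f j xhat)) ≤
        ∏ j, (a j - f j xhat) ^ (w j * (a j - f j xhat)) := fun x hx hxa' =>
    Real.prod_rpow_le_prod_rpow_of_sum_mul_le _ (fun j _ => sub_nonneg.2 (hxa' j))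
      (fun j _ => sub_nonneg.2 (hxa j)) (fun j _ => hw j) (hslack x hx)
  obtain ⟨xbar, hxbarK, hxbar⟩ := hSlater
  obtain ⟨j₀, -, hj₀⟩ :=
    Finset.exists_lt_of_sum_lt (show ∑ _j, (0 : ℝ) < ∑ j, w j by simpa using hwpos)
  have hslack_pos : 0 < ∑ j, w j * (a j - f j xbar) :=
    Finset.sum_pos' (fun j _ => mul_nonneg (hw j) (sub_nonneg.2 (hxbar j).le))
      ⟨j₀, Finset.mem_univ _, mul_pos hj₀ (sub_pos.2 (hxbar j₀))⟩
  obtain ⟨j₁, -, hj₁⟩ := Finset.exists_ne_zero_of_sum_ne_zero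
    (hslack_pos.trans_le (hslack xbar hxbarK)).ne'
  exact ⟨fun j => w j * (a j - f j xhat), fun j => mul_nonneg (hw j) (sub_nonneg.2 (hxa j)),
    ⟨j₁, hj₁⟩, hprod, fun x hx => hCD_le_hCD hxa (hprod x hx)⟩

/-- Under the Slater condition, any weak Pareto optimal point that is feasible for the
inequality system solves the Cobb-Douglas scalarized problem for suitable nonnegative,
not-all-zero parameters `α`. -/
theorem stmt_12 {n m : ℕ} (K : Set (Fin n → ℝ)) (hKne : K.Nonempty)
    (hKcl : IsClosed K) (hKconv : Convex ℝ K)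
    (f : Fin m → (Fin n → ℝ) → ℝ) (hf : ∀ j, ConvexOn ℝ Set.univ (f j))
    (a : Fin m → ℝ)
    (hSlater : ∃ x ∈ K, ∀ j, f j x < a j)
    (xhat : Fin n → ℝ) (hxK : xhat ∈ K)
    (hW : ∀ y ∈ K, ∃ j, f j xhat ≤ f j y)
    (hxa : ∀ j, f j xhat ≤ a j) :
    ∃ α : Fin m → ℝ, (∀ j, 0 ≤ α j) ∧ (∃ j, α j ≠ 0) ∧
      (∀ x ∈ K, (∀ j, f j x ≤ a j) →
        ∏ j, (a j - f j x) ^ (α j) ≤ ∏ j, (a j - f j xhat) ^ (α j)) ∧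
      (∀ x ∈ K, hCD f a α x ≤ hCD f a α xhat) :=
  stmt_12_general K hKconv f hf a hSlater xhat hxK hW hxa
end

section
/- If x̂ is weak Pareto optimal for the multi-objective problem of minimizing (f_1,…,f_m) over K and x̂ is a Slater point (f_j(x̂) < a_j for all j), then there exist parameters α_1,…,α_m > 0 such that x̂ solves the Leontief scalarized problem: h_MIN(x̂) ≥ h_MIN(x) for all x ∈ K, where h_MIN(x) = min_{j=1,…,m} α_j (a_j − f_j(x)) if f_j(x) ≤ a_j for all j and h_MIN(x) = −∞ otherwise. -/
open Classical in
/-- The Leontief scalarized objective: `min_j α j * (a j − f j x)` when `f j x ≤ a j` for all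
`j`, and `−∞` otherwise. -/
noncomputable def hMIN {n m : ℕ} (f : Fin m → (Fin n → ℝ) → ℝ) (a : Fin m → ℝ)
    (α : Fin m → ℝ) (x : Fin n → ℝ) : EReal :=
  if ∀ j, f j x ≤ a j then (((⨅ j, α j * (a j - f j x)) : ℝ) : EReal) else ⊥

/-- Any weak Pareto optimal point that is a Slater point for the inequality system solves the
Leontief scalarized problem for suitable strictly positive parameters `α`. -/
theorem stmt_14 {n m : ℕ} (hm : 0 < m) (K : Set (Fin n → ℝ)) (hKne : K.Nonempty)
    (hKcl : IsClosed K) (hKconv : Convex ℝ K)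
    (f : Fin m → (Fin n → ℝ) → ℝ) (hf : ∀ j, ConvexOn ℝ Set.univ (f j))
    (a : Fin m → ℝ)
    (xhat : Fin n → ℝ) (hxK : xhat ∈ K)
    (hW : ∀ y ∈ K, ∃ j, f j xhat ≤ f j y)
    (hSlaterPt : ∀ j, f j xhat < a j) :
    ∃ α : Fin m → ℝ, (∀ j, 0 < α j) ∧
      ∀ x ∈ K, hMIN f a α x ≤ hMIN f a α xhat := by
  haveI : Nonempty (Fin m) := ⟨⟨0, hm⟩⟩
  set α : Fin m → ℝ := fun j => (a j - f j xhat)⁻¹ with hα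
  have hαpos : ∀ j, 0 < α j := fun j => inv_pos.2 (by linarith [hSlaterPt j])
  refine ⟨α, hαpos, fun x hxKmem => ?_⟩
  have hval : (⨅ j, α j * (a j - f j xhat)) = 1 := by
    have : ∀ j, α j * (a j - f j xhat) = 1 := fun j =>
      inv_mul_cancel₀ (by linarith [hSlaterPt j])
    simp [this]
  have hxhat : hMIN f a α xhat = (1 : ℝ) := by
    rw [hMIN, if_pos (fun j => (hSlaterPt j).le), hval]
  rw [hxhat, hMIN]
  split_ifs with h
  · obtain ⟨j, hj⟩ := hW x hxKmem
    have hle : α j * (a j - f j x) ≤ 1 := by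
      have h1 : α j * (a j - f j x) ≤ α j * (a j - f j xhat) :=
        mul_le_mul_of_nonneg_left (by linarith) (hαpos j).le
      rw [inv_mul_cancel₀ (by linarith [hSlaterPt j] : a j - f j xhat ≠ 0)] at h1
      exact h1
    have hinf : (⨅ j, α j * (a j - f j x)) ≤ 1 := by
      refine le_trans (ciInf_le ?_ j) hle
      exact (Set.finite_range _).bddBelow
    exact_mod_cast hinf
  · exact bot_le
end

section
/- Let α_1,…,α_m ≥ 0, κ ∈ (0,1], and ρ ≤ 1 with ρ ≠ 0, and let u_CES : ℝᵐ → ℝ ∪ {−∞} be the CES utility function defined by u_CES(y) = (Σ_{j=1}^m α_j y_j^ρ)^{κ/ρ} if y ≥ 0 componentwise and u_CES(y) = −∞ otherwise (with the conventions 1/0 = ∞ and 1/∞ = 0, so that for ρ < 0 the value is 0 whenever some y_j = 0 with α_j > 0). Then u_CES is concave, i.e., u_CES(λy + (1−λ)z) ≥ λ u_CES(y) + (1−λ) u_CES(z) for all y, z ∈ ℝᵐ and λ ∈ (0,1). -/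
/-!
The aggregate `F y = (∑ α_j y_j ^ ρ) ^ (1/ρ)` is positively homogeneous of degree one, and its
superlevel set `{F ≥ 1} = {∑ α_j y_j ^ ρ / ρ ≥ 1/ρ}` is convex because `t ↦ t ^ ρ / ρ` is concave
for `ρ ≤ 1`, `ρ ≠ 0`. Scaling `a` and `b` to level one and combining them with weights
`F a / (F a + F b)` and `F b / (F a + F b)` gives `F a + F b ≤ F (a + b)`; superadditivity and
homogeneity make `F` concave, and `u_CES = F ^ κ` with `t ↦ t ^ κ` concave and monotone.
-/

open Classical in
/-- The CES utility function with weights `α`, homogeneity degree `κ` and substitution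
parameter `ρ`: on the nonnegative orthant it equals `(∑ j, α j * (y j) ^ ρ) ^ (κ/ρ)` (real
powers), with the convention that for `ρ < 0` the value is `0` whenever some coordinate `y j`
with `α j ≠ 0` vanishes (since then `y j ^ ρ = ∞` and `∞ ^ (κ/ρ) = 0`); outside the
nonnegative orthant the value is `−∞`. -/
noncomputable def uCES {m : ℕ} (α : Fin m → ℝ) (κ ρ : ℝ) (y : Fin m → ℝ) : EReal :=
  if ∀ j, 0 ≤ y j then
    (if ρ < 0 ∧ ∃ j, α j ≠ 0 ∧ y j = 0 then ((0 : ℝ) : EReal)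
      else (((∑ j, α j * (y j) ^ ρ) ^ (κ / ρ) : ℝ) : EReal))
  else ⊥

open Real Set

theorem convexOn_rpow_of_nonpos {p : ℝ} (hp : p ≤ 0) : ConvexOn ℝ (Ioi 0) fun x : ℝ ↦ x ^ p := by
  refine ⟨convex_Ioi 0, fun x (hx : 0 < x) y (hy : 0 < y) a b ha hb hab ↦ ?_⟩
  have hxy : 0 < a • x + b • y := (convex_Ioi (0 : ℝ)) hx hy ha hb hab
  have hlog : a * log x + b * log y ≤ log (a • x + b • y) :=
    strictConcaveOn_log_Ioi.concaveOn.2 hx hy ha hb hab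
  simp only [smul_eq_mul] at hxy hlog ⊢
  rw [rpow_def_of_pos hxy, rpow_def_of_pos hx, rpow_def_of_pos hy]
  calc exp (log (a * x + b * y) * p) ≤ exp (a * (log x * p) + b * (log y * p)) :=
        exp_le_exp.2 (by nlinarith [mul_le_mul_of_nonpos_right hlog hp])
    _ ≤ a * exp (log x * p) + b * exp (log y * p) := convexOn_exp.2 trivial trivial ha hb hab

theorem mul_rpow_div_add_mul_rpow_div_le {ρ s t μ ν : ℝ} (hρ1 : ρ ≤ 1) (hρ0 : ρ ≠ 0)
    (hs : 0 ≤ s) (ht : 0 ≤ t) (hst : ρ < 0 → 0 < s ∧ 0 < t) (hμ : 0 ≤ μ) (hν : 0 ≤ ν)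
    (hμν : μ + ν = 1) :
    μ * (s ^ ρ / ρ) + ν * (t ^ ρ / ρ) ≤ (μ * s + ν * t) ^ ρ / ρ := by
  rw [mul_div_assoc', mul_div_assoc', ← add_div]
  rcases hρ0.lt_or_gt with hρ | hρ
  · obtain ⟨hs, ht⟩ := hst hρ
    exact div_le_div_of_nonpos_of_le hρ.le ((convexOn_rpow_of_nonpos hρ.le).2 hs ht hμ hν hμν)
  · exact div_le_div_of_nonneg_right ((concaveOn_rpow hρ.le hρ1).2 hs ht hμ hν hμν) hρ.le

theorem one_le_of_inv_le_rpow_div {ρ t : ℝ} (hρ : ρ ≠ 0) (ht : 0 < t) (h : ρ⁻¹ ≤ t ^ ρ / ρ) :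
    1 ≤ t := by
  by_contra! ht1
  rcases hρ.lt_or_gt with hρ | hρ
  · rw [le_div_iff_of_neg hρ, inv_mul_cancel₀ hρ.ne] at h
    exact h.not_gt (one_lt_rpow_of_pos_of_lt_one_of_neg ht ht1 hρ)
  · rw [le_div_iff₀ hρ, inv_mul_cancel₀ hρ.ne'] at h
    exact h.not_gt (rpow_lt_one ht.le ht1 hρ)

theorem concaveOn_of_superadditive_of_homogeneous {E : Type*} [AddCommMonoid E] [Module ℝ E]
    {s : Set E} {f : E → ℝ} (hs : Convex ℝ s) (hsmul_mem : ∀ c : ℝ, 0 < c → ∀ x ∈ s, c • x ∈ s)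
    (hadd : ∀ x ∈ s, ∀ y ∈ s, f x + f y ≤ f (x + y))
    (hsmul : ∀ c : ℝ, 0 < c → ∀ x ∈ s, f (c • x) = c * f x) : ConcaveOn ℝ s f := by
  refine ⟨hs, fun x hx y hy a b ha hb hab ↦ ?_⟩
  rcases ha.eq_or_lt with rfl | ha
  · rw [zero_add] at hab
    simp [hab]
  rcases hb.eq_or_lt with rfl | hb
  · rw [add_zero] at hab
    simp [hab]
  calc a • f x + b • f y = f (a • x) + f (b • y) := by
        rw [hsmul a ha x hx, hsmul b hb y hy, smul_eq_mul, smul_eq_mul]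
    _ ≤ f (a • x + b • y) := hadd _ (hsmul_mem a ha x hx) _ (hsmul_mem b hb y hy)

section
variable {ι : Type*} [Fintype ι] {α : ι → ℝ} {ρ : ℝ} {a b y : ι → ℝ}

noncomputable def cesSum (α : ι → ℝ) (ρ : ℝ) (y : ι → ℝ) : ℝ :=
  ∑ j, α j * y j ^ ρ

open Classical in
/-- The `if` reproduces the convention of `uCES`: for `ρ < 0`, `Real.rpow` sends `0 ^ ρ` to `0`
rather than `∞`, so a vanishing coordinate of positive weight must be caught by hand. -/
noncomputable def cesMean (α : ι → ℝ) (ρ : ℝ) (y : ι → ℝ) : ℝ :=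
  if ρ < 0 ∧ ∃ j, α j ≠ 0 ∧ y j = 0 then 0 else cesSum α ρ y ^ ρ⁻¹

theorem cesSum_nonneg (hα : 0 ≤ α) (hy : 0 ≤ y) : 0 ≤ cesSum α ρ y :=
  Finset.sum_nonneg fun j _ ↦ mul_nonneg (hα j) (rpow_nonneg (hy j) ρ)

theorem cesSum_smul {c : ℝ} (hc : 0 ≤ c) (hy : 0 ≤ y) :
    cesSum α ρ (c • y) = c ^ ρ * cesSum α ρ y := by
  simp only [cesSum, Finset.mul_sum, Pi.smul_apply, smul_eq_mul, mul_rpow hc (hy _)]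
  exact Finset.sum_congr rfl fun j _ ↦ by ring

theorem mul_cesSum_div_add_mul_cesSum_div_le (hα : 0 ≤ α) (hρ1 : ρ ≤ 1) (hρ0 : ρ ≠ 0)
    (ha : 0 ≤ a) (hb : 0 ≤ b) (hab : ρ < 0 → ∀ j, α j ≠ 0 → 0 < a j ∧ 0 < b j) {μ ν : ℝ}
    (hμ : 0 ≤ μ) (hν : 0 ≤ ν) (hμν : μ + ν = 1) :
    μ * (cesSum α ρ a / ρ) + ν * (cesSum α ρ b / ρ) ≤ cesSum α ρ (μ • a + ν • b) / ρ := by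
  simp only [cesSum, Finset.sum_div, Finset.mul_sum, ← Finset.sum_add_distrib]
  refine Finset.sum_le_sum fun j _ ↦ ?_
  by_cases hj : α j = 0
  · simp [hj]
  calc μ * (α j * a j ^ ρ / ρ) + ν * (α j * b j ^ ρ / ρ)
      = α j * (μ * (a j ^ ρ / ρ) + ν * (b j ^ ρ / ρ)) := by ring
    _ ≤ α j * ((μ * a j + ν * b j) ^ ρ / ρ) := mul_le_mul_of_nonneg_left
        (mul_rpow_div_add_mul_rpow_div_le hρ1 hρ0 (ha j) (hb j) (fun hρ ↦ hab hρ j hj) hμ hν hμν)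
        (hα j)
    _ = α j * (μ • a + ν • b) j ^ ρ / ρ := by
        simp only [Pi.add_apply, Pi.smul_apply, smul_eq_mul]
        ring

theorem cesMean_nonneg (hα : 0 ≤ α) (hy : 0 ≤ y) : 0 ≤ cesMean α ρ y := by
  unfold cesMean
  split_ifs
  exacts [le_rfl, rpow_nonneg (cesSum_nonneg hα hy) _]

theorem cesMean_smul (hρ0 : ρ ≠ 0) (hα : 0 ≤ α) {c : ℝ} (hc : 0 < c) (hy : 0 ≤ y) :
    cesMean α ρ (c • y) = c * cesMean α ρ y := by
  simp only [cesMean, Pi.smul_apply, smul_eq_mul, mul_eq_zero, hc.ne', false_or]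
  split_ifs
  · rw [mul_zero]
  · rw [cesSum_smul hc.le hy, mul_rpow (rpow_nonneg hc.le ρ) (cesSum_nonneg hα hy),
      rpow_rpow_inv hc.le hρ0]

theorem cesMean_rpow (hρ0 : ρ ≠ 0) (hα : 0 ≤ α) (hy : 0 ≤ y) (hpos : 0 < cesMean α ρ y) :
    cesMean α ρ y ^ ρ = cesSum α ρ y := by
  unfold cesMean at *
  split_ifs at hpos ⊢
  · exact absurd hpos (lt_irrefl 0)
  · exact rpow_inv_rpow (cesSum_nonneg hα hy) hρ0

theorem pos_of_cesMean_pos (hρ : ρ < 0) (hy : 0 ≤ y) (hpos : 0 < cesMean α ρ y) {j : ι}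
    (hj : α j ≠ 0) : 0 < y j := by
  unfold cesMean at hpos
  split_ifs at hpos with h
  · exact absurd hpos (lt_irrefl 0)
  · exact (hy j).lt_of_ne' fun hyj ↦ h ⟨hρ, j, hj, hyj⟩

theorem cesMean_of_forall_pos (hy : ∀ j, α j ≠ 0 → 0 < y j) :
    cesMean α ρ y = cesSum α ρ y ^ ρ⁻¹ :=
  if_neg fun ⟨_, j, hj, hyj⟩ ↦ (hy j hj).ne' hyj

theorem cesMean_mono (hα : 0 ≤ α) (ha : 0 ≤ a) (hab : a ≤ b) :
    cesMean α ρ a ≤ cesMean α ρ b := by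
  have hb : 0 ≤ b := ha.trans hab
  rcases le_or_gt 0 ρ with hρ | hρ
  · have hle : cesSum α ρ a ≤ cesSum α ρ b := Finset.sum_le_sum fun j _ ↦
      mul_le_mul_of_nonneg_left (rpow_le_rpow (ha j) (hab j) hρ) (hα j)
    simp only [cesMean, hρ.not_gt, false_and, if_false]
    exact rpow_le_rpow (cesSum_nonneg hα ha) hle (inv_nonneg.2 hρ)
  rcases (cesMean_nonneg hα ha).eq_or_lt with h0 | hpos
  · exact h0 ▸ cesMean_nonneg hα hb
  have ha' : ∀ j, α j ≠ 0 → 0 < a j := fun j hj ↦ pos_of_cesMean_pos hρ ha hpos hj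
  have hb' : ∀ j, α j ≠ 0 → 0 < b j := fun j hj ↦ (ha' j hj).trans_le (hab j)
  -- `cesSum α ρ b > 0` is needed since `t ↦ t ^ ρ⁻¹` is not antitone at `0`
  obtain ⟨j₀, hj₀⟩ : ∃ j, α j ≠ 0 := by
    by_contra! h
    simp [cesMean, cesSum, h, hρ.ne] at hpos
  have hSb : 0 < cesSum α ρ b := Finset.sum_pos'
    (fun j _ ↦ mul_nonneg (hα j) (rpow_nonneg (hb j) ρ))
    ⟨j₀, Finset.mem_univ _, mul_pos ((hα j₀).lt_of_ne' hj₀) (rpow_pos_of_pos (hb' j₀ hj₀) ρ)⟩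
  have hle : cesSum α ρ b ≤ cesSum α ρ a := Finset.sum_le_sum fun j _ ↦ by
    by_cases hj : α j = 0
    · simp [hj]
    exact mul_le_mul_of_nonneg_left (rpow_le_rpow_of_nonpos (ha' j hj) (hab j) hρ.le) (hα j)
  rw [cesMean_of_forall_pos ha', cesMean_of_forall_pos hb']
  exact rpow_le_rpow_of_nonpos hSb hle (inv_nonpos.2 hρ.le)

theorem one_le_cesMean_smul_add_smul (hα : 0 ≤ α) (hρ1 : ρ ≤ 1) (hρ0 : ρ ≠ 0) (ha : 0 ≤ a)
    (hb : 0 ≤ b) (ha1 : cesMean α ρ a = 1) (hb1 : cesMean α ρ b = 1) {μ ν : ℝ} (hμ : 0 < μ)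
    (hν : 0 ≤ ν) (hμν : μ + ν = 1) : 1 ≤ cesMean α ρ (μ • a + ν • b) := by
  have hx : 0 ≤ μ • a + ν • b := add_nonneg (smul_nonneg hμ.le ha) (smul_nonneg hν hb)
  have hpos : 0 < cesMean α ρ (μ • a + ν • b) := calc
    0 < μ := hμ
    _ = cesMean α ρ (μ • a) := by rw [cesMean_smul hρ0 hα hμ ha, ha1, mul_one]
    _ ≤ _ := cesMean_mono hα (smul_nonneg hμ.le ha) (le_add_of_nonneg_right (smul_nonneg hν hb))
  have ha0 : 0 < cesMean α ρ a := ha1 ▸ one_pos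
  have hb0 : 0 < cesMean α ρ b := hb1 ▸ one_pos
  refine one_le_of_inv_le_rpow_div hρ0 hpos ?_
  rw [cesMean_rpow hρ0 hα hx hpos]
  calc ρ⁻¹ = μ * (cesSum α ρ a / ρ) + ν * (cesSum α ρ b / ρ) := by
        rw [← cesMean_rpow hρ0 hα ha ha0, ← cesMean_rpow hρ0 hα hb hb0, ha1, hb1, one_rpow,
          ← add_mul, hμν, one_mul, one_div]
    _ ≤ _ := mul_cesSum_div_add_mul_cesSum_div_le hα hρ1 hρ0 ha hb
        (fun hρ j hj ↦ ⟨pos_of_cesMean_pos hρ ha ha0 hj, pos_of_cesMean_pos hρ hb hb0 hj⟩)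
        hμ.le hν hμν

theorem cesMean_add_cesMean_le (hα : 0 ≤ α) (hρ1 : ρ ≤ 1) (hρ0 : ρ ≠ 0) (ha : 0 ≤ a)
    (hb : 0 ≤ b) :
    cesMean α ρ a + cesMean α ρ b ≤ cesMean α ρ (a + b) := by
  set A := cesMean α ρ a
  set B := cesMean α ρ b
  rcases (show 0 ≤ A from cesMean_nonneg hα ha).eq_or_lt with hA | hA
  · rw [← hA, zero_add]
    exact cesMean_mono hα hb (le_add_of_nonneg_left ha)
  rcases (show 0 ≤ B from cesMean_nonneg hα hb).eq_or_lt with hB | hB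
  · rw [← hB, add_zero]
    exact cesMean_mono hα ha (le_add_of_nonneg_right hb)
  have hAB : 0 < A + B := add_pos hA hB
  have hnormalize : ∀ {c y}, 0 ≤ y → cesMean α ρ y = c → 0 < c → cesMean α ρ (c⁻¹ • y) = 1 :=
    fun hy hc hc0 ↦ by rw [cesMean_smul hρ0 hα (inv_pos.2 hc0) hy, hc, inv_mul_cancel₀ hc0.ne']
  have hsum : a + b = (A + B) • ((A / (A + B)) • (A⁻¹ • a) + (B / (A + B)) • (B⁻¹ • b)) := by
    ext j
    simp only [Pi.add_apply, Pi.smul_apply, smul_eq_mul]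
    field_simp [hA.ne', hB.ne']
  rw [hsum, cesMean_smul hρ0 hα hAB (by positivity)]
  refine le_mul_of_one_le_right hAB.le (one_le_cesMean_smul_add_smul hα hρ1 hρ0 (by positivity)
    (by positivity) (hnormalize ha rfl hA) (hnormalize hb rfl hB) (by positivity) (by positivity)
    (by field_simp))

theorem concaveOn_cesMean (hα : 0 ≤ α) (hρ1 : ρ ≤ 1) (hρ0 : ρ ≠ 0) :
    ConcaveOn ℝ (Ici 0) (cesMean α ρ) :=
  concaveOn_of_superadditive_of_homogeneous (convex_Ici 0)
    (fun _ hc _ hy ↦ mem_Ici.2 (smul_nonneg hc.le hy))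
    (fun _ ha _ hb ↦ cesMean_add_cesMean_le hα hρ1 hρ0 ha hb)
    (fun _ hc _ hy ↦ cesMean_smul hρ0 hα hc hy)

theorem concaveOn_cesMean_rpow (hα : 0 ≤ α) (hρ1 : ρ ≤ 1) (hρ0 : ρ ≠ 0) {κ : ℝ} (hκ0 : 0 ≤ κ)
    (hκ1 : κ ≤ 1) : ConcaveOn ℝ (Ici 0) fun y ↦ cesMean α ρ y ^ κ := by
  refine ⟨convex_Ici 0, fun y (hy : 0 ≤ y) z (hz : 0 ≤ z) a b ha hb hab ↦ ?_⟩
  have hy' := cesMean_nonneg (ρ := ρ) hα hy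
  have hz' := cesMean_nonneg (ρ := ρ) hα hz
  calc a • cesMean α ρ y ^ κ + b • cesMean α ρ z ^ κ
      ≤ (a • cesMean α ρ y + b • cesMean α ρ z) ^ κ :=
        (concaveOn_rpow hκ0 hκ1).2 hy' hz' ha hb hab
    _ ≤ cesMean α ρ (a • y + b • z) ^ κ := rpow_le_rpow (by positivity)
        ((concaveOn_cesMean hα hρ1 hρ0).2 hy hz ha hb hab) hκ0

end

theorem uCES_of_nonneg {m : ℕ} {α : Fin m → ℝ} (hα : 0 ≤ α) {κ ρ : ℝ} (hκ : κ ≠ 0)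
    {y : Fin m → ℝ} (hy : 0 ≤ y) : uCES α κ ρ y = ((cesMean α ρ y ^ κ : ℝ) : EReal) := by
  rw [uCES, if_pos (show ∀ j, 0 ≤ y j from hy), cesMean]
  split_ifs
  · rw [zero_rpow hκ]
  · rw [← rpow_mul (cesSum_nonneg hα hy), div_eq_inv_mul, cesSum]

/-- For weights `α j ≥ 0`, `κ ∈ (0,1]` and `ρ ≤ 1`, `ρ ≠ 0`, the CES utility function is
concave as an extended-real-valued function on `ℝᵐ`. -/
theorem stmt_15 {m : ℕ} (α : Fin m → ℝ) (hα : ∀ j, 0 ≤ α j)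
    (κ ρ : ℝ) (hκ0 : 0 < κ) (hκ1 : κ ≤ 1) (hρ1 : ρ ≤ 1) (hρ0 : ρ ≠ 0) :
    ∀ y z : Fin m → ℝ, ∀ l : ℝ, 0 < l → l < 1 →
      (l : EReal) * uCES α κ ρ y + ((1 - l : ℝ) : EReal) * uCES α κ ρ z
        ≤ uCES α κ ρ (l • y + (1 - l) • z) := by
  intro y z l hl hl1
  have hl' : 0 < 1 - l := sub_pos.2 hl1
  by_cases hy : 0 ≤ y
  swap
  · rw [show uCES α κ ρ y = ⊥ from if_neg hy, EReal.coe_mul_bot_of_pos hl, EReal.bot_add]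
    exact bot_le
  by_cases hz : 0 ≤ z
  swap
  · rw [show uCES α κ ρ z = ⊥ from if_neg hz, EReal.coe_mul_bot_of_pos hl', EReal.add_bot]
    exact bot_le
  have hw : 0 ≤ l • y + (1 - l) • z := by positivity
  rw [uCES_of_nonneg hα hκ0.ne' hy, uCES_of_nonneg hα hκ0.ne' hz, uCES_of_nonneg hα hκ0.ne' hw]
  exact_mod_cast (concaveOn_cesMean_rpow hα hρ1 hρ0 hκ0.le hκ1).2 hy hz hl.le hl'.le (by ring)
end

section
/- Let F = {x ∈ K : f_j(x) ≤ a_j for all j = 1,…,m} and let J̄ = {j ∈ {1,…,m} : f_j(x) = a_j for all x ∈ F}. Define the reduced multi-objective problem of minimizing the objectives (f_j)_{j ∉ J̄} over the set K̃ = {x ∈ K : f_j(x) ≤ a_j for all j ∈ J̄}, and let F̃ = {x ∈ K̃ : f_j(x) ≤ a_j for all j ∉ J̄}. Then a point x̂ is Pareto optimal for the original problem (minimizing (f_1,…,f_m) over K) and lies in F if and only if x̂ lies in F̃ and is Pareto optimal for the reduced problem. -/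
/-- Equivalence between the original and reduced multi-objective problems: a point `x̂` is
Pareto optimal for minimizing `(f 1, …, f m)` over `K` and lies in
`F = {x ∈ K : f j x ≤ a j ∀ j}` if and only if `x̂` lies in `F̃` and is Pareto optimal for the
reduced problem of minimizing `(f j)_{j ∉ J̄}` over `K̃`, where
`J̄ = {j : f j x = a j for all x ∈ F}`, `K̃ = {x ∈ K : f j x ≤ a j ∀ j ∈ J̄}` and
`F̃ = {x ∈ K̃ : f j x ≤ a j ∀ j ∉ J̄}`. -/
theorem stmt_19 {n m : ℕ} (K : Set (Fin n → ℝ)) (hKne : K.Nonempty)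
    (hKcl : IsClosed K) (hKconv : Convex ℝ K)
    (f : Fin m → (Fin n → ℝ) → ℝ) (hf : ∀ j, ConvexOn ℝ Set.univ (f j))
    (a : Fin m → ℝ) (xhat : Fin n → ℝ)
    (F : Set (Fin n → ℝ)) (hF : F = {x | x ∈ K ∧ ∀ j, f j x ≤ a j})
    (Jb : Set (Fin m)) (hJb : Jb = {j | ∀ x ∈ F, f j x = a j})
    (Kt : Set (Fin n → ℝ)) (hKt : Kt = {x | x ∈ K ∧ ∀ j ∈ Jb, f j x ≤ a j})
    (Ft : Set (Fin n → ℝ)) (hFt : Ft = {x | x ∈ Kt ∧ ∀ j ∉ Jb, f j x ≤ a j}) :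
    ((xhat ∈ K ∧ ∀ x ∈ K, (∃ j, f j xhat < f j x) ∨ (∀ j, f j xhat ≤ f j x)) ∧ xhat ∈ F)
      ↔ (xhat ∈ Ft ∧ (xhat ∈ Kt ∧ ∀ x ∈ Kt,
          (∃ j ∉ Jb, f j xhat < f j x) ∨ (∀ j ∉ Jb, f j xhat ≤ f j x))) := by
  subst hF hJb hKt hFt
  constructor
  · rintro ⟨⟨hxK, hPar⟩, hxF⟩
    have hxa : ∀ j, f j xhat ≤ a j := hxF.2
    have hxKt : xhat ∈ {x | x ∈ K ∧ ∀ j ∈ {j | ∀ x ∈ {x | x ∈ K ∧ ∀ j, f j x ≤ a j}, f j x = a j}, f j x ≤ a j} :=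
      ⟨hxK, fun j _ => hxa j⟩
    refine ⟨⟨hxKt, fun j _ => hxa j⟩, hxKt, ?_⟩
    rintro x ⟨hxK', hxJ⟩
    rcases hPar x hxK' with ⟨j, hj⟩ | h
    · left
      refine ⟨j, fun hjJb => ?_, hj⟩
      have h1 := hjJb xhat hxF
      have h2 := hxJ j hjJb
      linarith
    · right; exact fun j _ => h j
  · rintro ⟨⟨⟨hxK, hxJb⟩, hxnJb⟩, _, hPar⟩
    have hxa : ∀ j, f j xhat ≤ a j := by
      intro j
      by_cases hj : j ∈ {j | ∀ x ∈ {x | x ∈ K ∧ ∀ j, f j x ≤ a j}, f j x = a j}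
      · exact hxJb j hj
      · exact hxnJb j hj
    have hxF : xhat ∈ {x | x ∈ K ∧ ∀ j, f j x ≤ a j} := ⟨hxK, hxa⟩
    refine ⟨⟨hxK, ?_⟩, hxF⟩
    intro x hxK'
    by_cases hxKt' : ∀ j ∈ {j | ∀ x ∈ {x | x ∈ K ∧ ∀ j, f j x ≤ a j}, f j x = a j}, f j x ≤ a j
    · rcases hPar x ⟨hxK', hxKt'⟩ with ⟨j, _, hj⟩ | h
      · left; exact ⟨j, hj⟩
      · by_cases hxFc : ∀ j, j ∉ {j | ∀ x ∈ {x | x ∈ K ∧ ∀ j, f j x ≤ a j}, f j x = a j} → f j x ≤ a j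
        · -- x ∈ F
          have hxF' : x ∈ {x | x ∈ K ∧ ∀ j, f j x ≤ a j} := by
            refine ⟨hxK', fun j => ?_⟩
            by_cases hj : j ∈ {j | ∀ x ∈ {x | x ∈ K ∧ ∀ j, f j x ≤ a j}, f j x = a j}
            · exact hxKt' j hj
            · exact hxFc j hj
          right; intro j
          by_cases hj : j ∈ {j | ∀ x ∈ {x | x ∈ K ∧ ∀ j, f j x ≤ a j}, f j x = a j}
          · have h1 := hj xhat hxF
            have h2 := hj x hxF'
            linarith
          · exact h j hj
        · push_neg at hxFc
          obtain ⟨j, hjn, hjx⟩ := hxFc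
          left; exact ⟨j, lt_of_le_of_lt (hxa j) hjx⟩
    · push_neg at hxKt'
      obtain ⟨j, hjJb, hjx⟩ := hxKt'
      left
      refine ⟨j, ?_⟩
      have h1 := hjJb xhat hxF
      linarith
end
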